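/- Let q be an odd prime power and let α ∈ F_{q⁴} be a root of a monic irreducible quartic f ∈ F_q[x]. Set α₁ = α, α₂ = α^q, α₃ = α^{q²}, α₄ = α^{q³}. Then there is a unique involution Γ ∈ PGL₂(F_q) that swaps α₁ with α₃ and α₂ with α₄. -/

import Mathlib

open Matrix
open scoped LinearAlgebra.Projectivization

/-- The Möbius action of `GL(2,K)` on the projective line `ℙ K (Fin 2 → K)`.
Since scalar matrices act trivially, this realizes the action of `PGL₂(K)`. -/
noncomputable def mobius {K : Type*} [Field K] (M : GL (Fin 2) K)
    (p : ℙ K (Fin 2 → K)) : ℙ K (Fin 2 → K) :=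
  Projectivization.map
    (LinearMap.GeneralLinearGroup.toLinearEquiv
      (Matrix.GeneralLinearGroup.toLin M)).toLinearMap
    (LinearEquiv.injective _) p

/-- The point `[x : 1]` of the projective line. -/
noncomputable def pt {K : Type*} [Field K] (x : K) : ℙ K (Fin 2 → K) :=
  Projectivization.mk K ![x, 1] (by
    intro h
    simpa using congrFun h 1)

/-!
Write `β = α ^ q ^ 2`. A matrix `!![a, b; c, d]` swaps `α` and `β` exactly when `d = -a` and
`a (α + β) + b = c αβ`. The elements `1`, `α + β`, `αβ` are fixed by `x ↦ x ^ q ^ 2`, so they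
lie in the quadratic subfield `F_{q²}` and satisfy a nontrivial `F`-linear relation; as `α` has
degree `4`, `α + β` and `αβ` are not both in `F`, so these relations form a line, which gives the
uniqueness in `PGL₂(F)`. Applying Frobenius to the relation shows that the same matrix swaps `α^q`
and `α^{q³}`, and a trace-zero matrix squares to a scalar, hence is an involution.
-/

section Mobius
variable {K : Type*} [Field K]

lemma mulVec_ne_zero (M : GL (Fin 2) K) {v : Fin 2 → K} (hv : v ≠ 0) :
    (M : Matrix (Fin 2) (Fin 2) K) *ᵥ v ≠ 0 := by
  simpa using (Matrix.mulVec_injective_iff_isUnit.2 M.isUnit).ne hv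

lemma mobius_mk (M : GL (Fin 2) K) {v : Fin 2 → K} (hv : v ≠ 0) :
    mobius M (Projectivization.mk K v hv) =
      Projectivization.mk K ((M : Matrix (Fin 2) (Fin 2) K) *ᵥ v) (mulVec_ne_zero M hv) :=
  rfl

lemma mobius_mul (M N : GL (Fin 2) K) (p : ℙ K (Fin 2 → K)) :
    mobius (M * N) p = mobius M (mobius N p) := by
  induction p using Projectivization.ind with
  | h v hv => simp only [mobius_mk, Units.val_mul, Matrix.mulVec_mulVec]

lemma mobius_one : mobius (1 : GL (Fin 2) K) = id := by
  funext p
  induction p using Projectivization.ind with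
  | h v hv => simp only [mobius_mk, Units.val_one, Matrix.one_mulVec, id]

lemma mobius_eq_of_val_eq_smul {M N : GL (Fin 2) K} {t : K}
    (h : (N : Matrix (Fin 2) (Fin 2) K) = t • (M : Matrix (Fin 2) (Fin 2) K)) :
    mobius N = mobius M := by
  have ht : t ≠ 0 := by
    rintro rfl
    simpa [h] using N.isUnit
  funext p
  induction p using Projectivization.ind with
  | h v hv =>
    rw [mobius_mk, mobius_mk, Projectivization.mk_eq_mk_iff]
    exact ⟨Units.mk0 t ht, by rw [h, Matrix.smul_mulVec, Units.smul_mk0]⟩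

lemma mobius_pt_eq_pt_iff (M : GL (Fin 2) K) (x y : K) :
    mobius M (pt x) = pt y ↔ M 0 0 * x + M 0 1 = y * (M 1 0 * x + M 1 1) := by
  have hMx : (M : Matrix (Fin 2) (Fin 2) K) *ᵥ ![x, 1] =
      ![M 0 0 * x + M 0 1, M 1 0 * x + M 1 1] := by
    ext i; fin_cases i <;> simp [Matrix.mulVec, dotProduct, Fin.sum_univ_two]
  rw [pt, pt, mobius_mk, Projectivization.mk_eq_mk_iff]
  constructor
  · rintro ⟨u, hu⟩
    rw [hMx] at hu
    have h0 := congrFun hu 0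
    have h1 := congrFun hu 1
    simp only [Units.smul_def, Matrix.smul_cons, smul_eq_mul, Matrix.smul_empty,
      Matrix.cons_val_zero, Matrix.cons_val_one] at h0 h1
    rw [← h0, ← h1, mul_one, mul_comm]
  · intro h
    have hd : M 1 0 * x + M 1 1 ≠ 0 := by
      intro hd
      apply mulVec_ne_zero M (v := ![x, 1]) (by simp)
      rw [hMx, h, hd, mul_zero]
      simp
    refine ⟨Units.mk0 _ hd, ?_⟩
    rw [hMx, h, Units.smul_mk0]
    ext i; fin_cases i <;> simp [mul_comm]

def Swaps (M : GL (Fin 2) K) (x y : K) : Prop :=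
  mobius M (pt x) = pt y ∧ mobius M (pt y) = pt x

lemma swaps_iff (M : GL (Fin 2) K) {x y : K} (hxy : x ≠ y) :
    Swaps M x y ↔ M 1 1 = -M 0 0 ∧ M 0 0 * (x + y) + M 0 1 = M 1 0 * (x * y) := by
  rw [Swaps, mobius_pt_eq_pt_iff, mobius_pt_eq_pt_iff]
  constructor
  · rintro ⟨hx, hy⟩
    have htr : (M 0 0 + M 1 1) * (x - y) = 0 := by linear_combination hx - hy
    have htr' : M 1 1 = -M 0 0 := by
      linear_combination (mul_eq_zero.1 htr).resolve_right (sub_ne_zero.2 hxy)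
    exact ⟨htr', by linear_combination hx + y * htr'⟩
  · rintro ⟨htr, hrel⟩
    constructor <;> rw [htr] <;> linear_combination hrel

lemma Swaps.mobius_mobius {M : GL (Fin 2) K} {x y : K} (h : Swaps M x y) (hxy : x ≠ y)
    (p : ℙ K (Fin 2 → K)) : mobius M (mobius M p) = p := by
  have htr := ((swaps_iff M hxy).1 h).1
  have hsq : ((M * M : GL (Fin 2) K) : Matrix (Fin 2) (Fin 2) K) =
      (M 0 0 * M 0 0 + M 0 1 * M 1 0) • ((1 : GL (Fin 2) K) : Matrix (Fin 2) (Fin 2) K) := by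
    ext i j
    fin_cases i <;> fin_cases j <;>
      simp [Matrix.mul_apply, Fin.sum_univ_two, htr] <;> ring
  rw [← mobius_mul, mobius_eq_of_val_eq_smul hsq, mobius_one, id]

end Mobius

section BaseChange
variable {F K L : Type*} [Field F] [Field K] [Field L] [Algebra F K] [Algebra F L]

lemma Swaps.algHom {M : GL (Fin 2) F} {x y : K}
    (h : Swaps (Matrix.GeneralLinearGroup.map (algebraMap F K) M) x y) (σ : K →ₐ[F] L) :
    Swaps (Matrix.GeneralLinearGroup.map (algebraMap F L) M) (σ x) (σ y) := by
  simp only [Swaps, mobius_pt_eq_pt_iff, Matrix.GeneralLinearGroup.map_apply] at h ⊢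
  exact ⟨by simpa using congrArg σ h.1, by simpa using congrArg σ h.2⟩

end BaseChange

section Swap
variable {F K : Type*} [Field F] [Field K] [Algebra F K]

lemma linearCombination_sym_apply (α β : K) (v : Fin 3 → F) :
    Fintype.linearCombination F ![α + β, 1, α * β] v =
      algebraMap F K (v 0) * (α + β) + algebraMap F K (v 1) +
        algebraMap F K (v 2) * (α * β) := by
  simp [Fintype.linearCombination_apply, Fin.sum_univ_three, Algebra.smul_def]

lemma swaps_map_iff (M : GL (Fin 2) F) {α β : K} (hαβ : α ≠ β) :
    Swaps (Matrix.GeneralLinearGroup.map (algebraMap F K) M) α β ↔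
      M 1 1 = -M 0 0 ∧
        Fintype.linearCombination F ![α + β, 1, α * β] ![M 0 0, M 0 1, -M 1 0] = 0 := by
  rw [swaps_iff _ hαβ, linearCombination_sym_apply]
  simp only [Matrix.GeneralLinearGroup.map_apply, Matrix.cons_val_zero, Matrix.cons_val_one,
    Matrix.cons_val_two, Matrix.head_cons, Matrix.tail_cons]
  refine and_congr (by rw [← map_neg, (algebraMap F K).injective.eq_iff]) ?_
  rw [map_neg]
  constructor <;> intro h <;> linear_combination h

lemma det_ne_zero_of_linearCombination_sym_eq_zero {α β : K}
    (hα : α ∉ Set.range (algebraMap F K)) (hβ : β ∉ Set.range (algebraMap F K))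
    {v : Fin 3 → F} (hv : v ≠ 0)
    (h : Fintype.linearCombination F ![α + β, 1, α * β] v = 0) :
    (!![v 0, v 1; -v 2, -v 0]).det ≠ 0 := by
  rw [Matrix.det_fin_two_of, linearCombination_sym_apply] at *
  intro hdet
  by_cases hv2 : v 2 = 0
  · have hv0 : v 0 = 0 :=
      (pow_eq_zero_iff two_ne_zero).1 (by linear_combination -hdet + v 1 * hv2)
    have hv1 : v 1 = 0 := by
      apply (algebraMap F K).injective
      simpa [hv0, hv2] using h
    exact hv (by ext i; fin_cases i <;> assumption)
  · have hroot : ∀ x : K, algebraMap F K (v 2) * x + algebraMap F K (v 0) = 0 →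
        x ∈ Set.range (algebraMap F K) := fun x hx =>
      have hv2K : algebraMap F K (v 2) ≠ 0 := (_root_.map_ne_zero _).2 hv2
      ⟨-(v 0 / v 2), by
        rw [map_neg, map_div₀]
        field_simp
        linear_combination -hx⟩
    have hdetK := congrArg (algebraMap F K) hdet
    simp only [map_sub, map_mul, map_neg, map_zero] at hdetK
    have key : (algebraMap F K (v 2) * α + algebraMap F K (v 0)) *
        (algebraMap F K (v 2) * β + algebraMap F K (v 0)) = 0 := by
      linear_combination algebraMap F K (v 2) * h - hdetK
    rcases mul_eq_zero.1 key with hx | hx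
    · exact hα (hroot α hx)
    · exact hβ (hroot β hx)

theorem exists_swaps_of_finrank_span_eq_two {α β : K} (hαβ : α ≠ β)
    (hα : α ∉ Set.range (algebraMap F K)) (hβ : β ∉ Set.range (algebraMap F K))
    (hspan : Module.finrank F (Submodule.span F (Set.range ![α + β, 1, α * β])) = 2) :
    ∃ M : GL (Fin 2) F, Swaps (Matrix.GeneralLinearGroup.map (algebraMap F K) M) α β ∧
      ∀ M' : GL (Fin 2) F, Swaps (Matrix.GeneralLinearGroup.map (algebraMap F K) M') α β →
        mobius (Matrix.GeneralLinearGroup.map (algebraMap F K) M') =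
          mobius (Matrix.GeneralLinearGroup.map (algebraMap F K) M) := by
  set ℓ := Fintype.linearCombination F ![α + β, 1, α * β]
  have hker : Module.finrank F (LinearMap.ker ℓ) = 1 := by
    have := LinearMap.finrank_range_add_finrank_ker ℓ
    rw [Fintype.range_linearCombination, hspan, Module.finrank_fin_fun] at this
    omega
  obtain ⟨v, hv⟩ := Module.finrank_pos_iff_exists_ne_zero.1 (hker ▸ Nat.one_pos)
  have hv0 : (v : Fin 3 → F) ≠ 0 := fun h => hv (Subtype.ext h)
  let M := Matrix.GeneralLinearGroup.mkOfDetNeZero _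
    (det_ne_zero_of_linearCombination_sym_eq_zero hα hβ hv0 v.2)
  refine ⟨M, (swaps_map_iff M hαβ).2 ⟨rfl, ?_⟩, fun M' hM' => ?_⟩
  · convert LinearMap.mem_ker.1 v.2
    ext i; fin_cases i <;> simp [M]
  obtain ⟨htr, hrel⟩ := (swaps_map_iff M' hαβ).1 hM'
  obtain ⟨t, ht⟩ := (finrank_eq_one_iff_of_nonzero' v hv).1 hker ⟨_, hrel⟩
  have h0 : t * v.1 0 = M' 0 0 := congrFun (congrArg Subtype.val ht) 0
  have h1 : t * v.1 1 = M' 0 1 := congrFun (congrArg Subtype.val ht) 1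
  have h2 : t * v.1 2 = -M' 1 0 := congrFun (congrArg Subtype.val ht) 2
  have hM'M : (M' : Matrix (Fin 2) (Fin 2) F) = t • (M : Matrix (Fin 2) (Fin 2) F) := by
    ext i j
    fin_cases i <;> fin_cases j <;> simp [M]
    · exact h0.symm
    · exact h1.symm
    · linear_combination h2
    · linear_combination htr + h0
  apply mobius_eq_of_val_eq_smul (t := algebraMap F K t)
  ext i j
  simp [hM'M]

end Swap

section FixedSubalgebra
open Polynomial
variable {F K : Type*} [Field F] [Field K] [Algebra F K]

lemma natDegree_minpoly_le_finrank_of_mem {E : Subalgebra F K} [FiniteDimensional F E] {x : K}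
    (hx : x ∈ E) : (minpoly F x).natDegree ≤ Module.finrank F E := by
  have := minpoly.algHom_eq E.val Subtype.val_injective ⟨x, hx⟩
  exact this ▸ minpoly.natDegree_le _

lemma not_mem_range_of_one_lt_natDegree_minpoly {x : K} (hx : 1 < (minpoly F x).natDegree) :
    x ∉ Set.range (algebraMap F K) := fun h =>
  hx.ne' (minpoly.natDegree_eq_one_iff.2 h)

variable [FiniteDimensional F K] (τ : K →ₐ[F] K) {α : K}

lemma ne_apply_of_finrank_equalizer_le_two
    (hfix : Module.finrank F (AlgHom.equalizer τ (AlgHom.id F K)) ≤ 2)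
    (hdeg : 2 < (minpoly F α).natDegree) : α ≠ τ α := fun h =>
  ((natDegree_minpoly_le_finrank_of_mem (E := AlgHom.equalizer τ (AlgHom.id F K)) h.symm).trans
    hfix).not_gt hdeg

lemma finrank_span_sym_eq_two (hτ : τ (τ α) = α)
    (hfix : Module.finrank F (AlgHom.equalizer τ (AlgHom.id F K)) ≤ 2)
    (hdeg : 2 < (minpoly F α).natDegree) :
    Module.finrank F (Submodule.span F (Set.range ![α + τ α, 1, α * τ α])) = 2 := by
  set W := Submodule.span F (Set.range ![α + τ α, 1, α * τ α])
  have hW : W ≤ Subalgebra.toSubmodule (AlgHom.equalizer τ (AlgHom.id F K)) := by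
    rw [Submodule.span_le, Set.range_subset_iff]
    intro i
    fin_cases i <;> simp [hτ, add_comm, mul_comm]
  refine le_antisymm ((Submodule.finrank_mono hW).trans hfix) ?_
  by_contra! hlt
  have h1 : (1 : K) ∈ W := Submodule.subset_span ⟨1, rfl⟩
  have hW1 : F ∙ (1 : K) = W := Submodule.eq_of_le_of_finrank_le
    ((Submodule.span_singleton_le_iff_mem _ _).2 h1)
    (by rw [finrank_span_singleton one_ne_zero]; omega)
  obtain ⟨a, ha⟩ := Submodule.mem_span_singleton.1
    (hW1 ▸ Submodule.subset_span ⟨0, rfl⟩ : α + τ α ∈ F ∙ (1 : K))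
  obtain ⟨b, hb⟩ := Submodule.mem_span_singleton.1
    (hW1 ▸ Submodule.subset_span ⟨2, rfl⟩ : α * τ α ∈ F ∙ (1 : K))
  have hroot : Polynomial.aeval α (X ^ 2 - C a * X + C b) = 0 := by
    rw [Algebra.smul_def, mul_one] at ha hb
    simp only [map_add, map_sub, map_mul, map_pow, aeval_X, aeval_C, ha, hb]
    ring
  have hquad : (X ^ 2 - C a * X + C b : F[X]).degree = 2 := by compute_degree!
  have hle := minpoly.degree_le_of_ne_zero F α (by rintro h; simp [h] at hquad) hroot
  rw [hquad, Polynomial.degree_eq_natDegree (minpoly.ne_zero_of_finite F α)] at hle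
  exact (Nat.cast_le.1 hle).not_gt hdeg

end FixedSubalgebra

open Polynomial in
lemma finrank_equalizer_frobeniusAlgHom_pow_le {F K : Type*} [Field F] [Fintype F] [Field K]
    [Finite K] [Algebra F K] {k : ℕ} (hk : k ≠ 0) :
    Module.finrank F (AlgHom.equalizer (FiniteField.frobeniusAlgHom F K ^ k) (AlgHom.id F K)) ≤
      k := by
  classical
  have := Fintype.ofFinite K
  set E := AlgHom.equalizer (FiniteField.frobeniusAlgHom F K ^ k) (AlgHom.id F K)
  have hq : 1 < Fintype.card F := Fintype.one_lt_card
  have hroots : (E : Set K).toFinset.val ⊆ (X ^ Fintype.card F ^ k - X : K[X]).roots := by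
    intro x hx
    have hx : x ∈ E := Set.mem_toFinset.1 hx
    rw [AlgHom.mem_equalizer, AlgHom.coe_pow, FiniteField.coe_frobeniusAlgHom, pow_iterate] at hx
    simp [mem_roots (FiniteField.X_pow_card_pow_sub_X_ne_zero K hk hq), hx]
  have hcard := card_le_degree_of_subset_roots hroots
  rw [FiniteField.X_pow_card_pow_sub_X_natDegree_eq K hk hq, Set.toFinset_card,
    ← Nat.card_eq_fintype_card, SetLike.coe_sort_coe, Module.natCard_eq_pow_finrank (K := F),
    Nat.card_eq_fintype_card] at hcard
  exact (Nat.pow_le_pow_iff_right hq).1 hcard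

theorem unique_involution_for_irreducible_quartic_general
    {F : Type*} [Field F] [Fintype F] (q : ℕ) (hq : Fintype.card F = q)
    {K : Type*} [Field K] [Fintype K] [Algebra F K]
    (hK : Fintype.card K = q ^ 4)
    (f : Polynomial F) (hirr : Irreducible f)
    (hdeg : f.natDegree = 4)
    (α : K) (hroot : Polynomial.aeval α f = 0) :
    ∃ M : GL (Fin 2) F,
      mobius (Matrix.GeneralLinearGroup.map (algebraMap F K) M) (pt α) = pt (α ^ q ^ 2) ∧
      mobius (Matrix.GeneralLinearGroup.map (algebraMap F K) M) (pt (α ^ q ^ 2)) = pt α ∧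
      mobius (Matrix.GeneralLinearGroup.map (algebraMap F K) M) (pt (α ^ q)) = pt (α ^ q ^ 3) ∧
      mobius (Matrix.GeneralLinearGroup.map (algebraMap F K) M) (pt (α ^ q ^ 3)) = pt (α ^ q) ∧
      (∀ p, mobius (Matrix.GeneralLinearGroup.map (algebraMap F K) M)
        (mobius (Matrix.GeneralLinearGroup.map (algebraMap F K) M) p) = p) ∧
      (∀ M' : GL (Fin 2) F,
        mobius (Matrix.GeneralLinearGroup.map (algebraMap F K) M') (pt α) = pt (α ^ q ^ 2) →
        mobius (Matrix.GeneralLinearGroup.map (algebraMap F K) M') (pt (α ^ q ^ 2)) = pt α →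
        mobius (Matrix.GeneralLinearGroup.map (algebraMap F K) M') (pt (α ^ q)) = pt (α ^ q ^ 3) →
        mobius (Matrix.GeneralLinearGroup.map (algebraMap F K) M') (pt (α ^ q ^ 3)) = pt (α ^ q) →
        ∀ p, mobius (Matrix.GeneralLinearGroup.map (algebraMap F K) M') p =
          mobius (Matrix.GeneralLinearGroup.map (algebraMap F K) M) p) := by
  set σ := FiniteField.frobeniusAlgHom F K
  have hσ : ∀ x : K, σ x = x ^ q := fun x => by rw [FiniteField.coe_frobeniusAlgHom, hq]
  have hτ : ∀ x : K, (σ ^ 2) x = x ^ q ^ 2 := fun x => by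
    rw [AlgHom.coe_pow, FiniteField.coe_frobeniusAlgHom, pow_iterate, hq]
  have hτα : (σ ^ 2) ((σ ^ 2) α) = α := by
    rw [hτ, hτ, ← pow_mul, ← pow_add, ← hK, FiniteField.pow_card]
  have hdeg' : 2 < (minpoly F α).natDegree := by
    rw [← minpoly.eq_of_irreducible hirr hroot,
      Polynomial.natDegree_mul_C (by simpa using hirr.ne_zero), hdeg]
    norm_num
  have hfix := finrank_equalizer_frobeniusAlgHom_pow_le (F := F) (K := K) two_ne_zero
  have hne := ne_apply_of_finrank_equalizer_le_two _ hfix hdeg'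
  obtain ⟨M, hM, huniq⟩ := exists_swaps_of_finrank_span_eq_two hne
    (not_mem_range_of_one_lt_natDegree_minpoly (by omega))
    (not_mem_range_of_one_lt_natDegree_minpoly
      (by rw [minpoly.algHom_eq _ (σ ^ 2).injective]; omega))
    (finrank_span_sym_eq_two _ hτα hfix hdeg')
  have hM' := hM.algHom σ
  rw [hτ] at hne hM hM' huniq
  rw [hσ, hσ, ← pow_mul, ← pow_succ] at hM'
  exact ⟨M, hM.1, hM.2, hM'.1, hM'.2, hM.mobius_mobius hne,
    fun M' h₁ h₂ _ _ => congrFun (huniq M' ⟨h₁, h₂⟩)⟩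

/-- Let `q` be an odd prime power, `F` the field with `q` elements, `K = F_{q⁴}` a quartic
extension of `F`, and `α ∈ K` a root of a monic irreducible quartic `f ∈ F[x]`.  Setting
`α₁ = α`, `α₂ = α^q`, `α₃ = α^{q²}`, `α₄ = α^{q³}`, there is an involution in `PGL₂(F)`
(represented by a matrix `M ∈ GL₂(F)`, acting on `ℙ¹(K)` through `F ⊆ K`) that swaps
`α₁` with `α₃` and `α₂` with `α₄`, and it is unique as an element of `PGL₂(F)`. -/
theorem unique_involution_for_irreducible_quartic
    {F : Type*} [Field F] [Fintype F] (q : ℕ) (hq : Fintype.card F = q)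
    (hodd : Odd q)
    {K : Type*} [Field K] [Fintype K] [Algebra F K]
    (hK : Fintype.card K = q ^ 4)
    (f : Polynomial F) (hmonic : f.Monic) (hirr : Irreducible f)
    (hdeg : f.natDegree = 4)
    (α : K) (hroot : Polynomial.aeval α f = 0) :
    ∃ M : GL (Fin 2) F,
      mobius (Matrix.GeneralLinearGroup.map (algebraMap F K) M) (pt α) = pt (α ^ q ^ 2) ∧
      mobius (Matrix.GeneralLinearGroup.map (algebraMap F K) M) (pt (α ^ q ^ 2)) = pt α ∧
      mobius (Matrix.GeneralLinearGroup.map (algebraMap F K) M) (pt (α ^ q)) = pt (α ^ q ^ 3) ∧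
      mobius (Matrix.GeneralLinearGroup.map (algebraMap F K) M) (pt (α ^ q ^ 3)) = pt (α ^ q) ∧
      (∀ p, mobius (Matrix.GeneralLinearGroup.map (algebraMap F K) M)
        (mobius (Matrix.GeneralLinearGroup.map (algebraMap F K) M) p) = p) ∧
      (∀ M' : GL (Fin 2) F,
        mobius (Matrix.GeneralLinearGroup.map (algebraMap F K) M') (pt α) = pt (α ^ q ^ 2) →
        mobius (Matrix.GeneralLinearGroup.map (algebraMap F K) M') (pt (α ^ q ^ 2)) = pt α →
        mobius (Matrix.GeneralLinearGroup.map (algebraMap F K) M') (pt (α ^ q)) = pt (α ^ q ^ 3) →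
        mobius (Matrix.GeneralLinearGroup.map (algebraMap F K) M') (pt (α ^ q ^ 3)) = pt (α ^ q) →
        ∀ p, mobius (Matrix.GeneralLinearGroup.map (algebraMap F K) M') p =
          mobius (Matrix.GeneralLinearGroup.map (algebraMap F K) M) p) :=
  unique_involution_for_irreducible_quartic_general q hq hK f hirr hdeg α hroot
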